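/- arXiv:2301.12811 — 2 statements merged into one kernel-verified Lean document; each statement's English description precedes it below -/
import Mathlib

section
/- Let h : X → ℝ^D be an injective measurable function. For probability measures μ, ν on X, if the pushforwards of μ and ν under x ↦ ⟨ω, h(x)⟩ coincide for every unit vector ω ∈ S^{D−1}, then μ = ν. -/
open MeasureTheory
open scoped InnerProductSpace

/-! The characteristic function of a measure at `r • u` is that of its projection onto `u` at `r`,
so the projections onto unit vectors determine the characteristic function of `h₊μ`, hence `h₊μ`
itself. An injective measurable map out of a standard Borel space is a measurable embedding, so
pushing forward along `h` is injective. -/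

section CramerWold

variable {E : Type*} [NormedAddCommGroup E] [InnerProductSpace ℝ E] [MeasurableSpace E]
  [BorelSpace E]

lemma charFun_smul_eq_charFun_map_inner (P : Measure E) (u : E) (r : ℝ) :
    charFun P (r • u) = charFun (P.map (⟪u, ·⟫_ℝ)) r := by
  rw [charFun_apply, charFun_apply_real, integral_map (by fun_prop) (by fun_prop)]
  simp_rw [inner_smul_right, real_inner_comm u, Complex.ofReal_mul]

/-- **Cramér–Wold** -/
theorem Measure.ext_of_map_inner [SecondCountableTopology E] [CompleteSpace E]
    {P Q : Measure E} [IsProbabilityMeasure P] [IsProbabilityMeasure Q]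
    (h : ∀ u : E, ‖u‖ = 1 → P.map (⟪u, ·⟫_ℝ) = Q.map (⟪u, ·⟫_ℝ)) :
    P = Q := by
  refine Measure.ext_of_charFun (funext fun t => ?_)
  rcases eq_or_ne t 0 with rfl | ht
  · simp
  have ht' : ‖t‖ ≠ 0 := norm_ne_zero_iff.mpr ht
  have hunit : ‖‖t‖⁻¹ • t‖ = 1 := by
    rw [norm_smul, norm_inv, norm_norm, inv_mul_cancel₀ ht']
  have hdecomp : t = ‖t‖ • ‖t‖⁻¹ • t := by rw [smul_inv_smul₀ ht']
  rw [hdecomp, charFun_smul_eq_charFun_map_inner, charFun_smul_eq_charFun_map_inner, h _ hunit]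

end CramerWold

theorem stmt_6_general {X : Type*} [MeasurableSpace X] [StandardBorelSpace X] {D : ℕ}
    (h : X → EuclideanSpace ℝ (Fin D)) (hm : Measurable h) (hinj : Function.Injective h)
    (μ ν : Measure X) [IsProbabilityMeasure μ] [IsProbabilityMeasure ν]
    (hproj : ∀ ω : EuclideanSpace ℝ (Fin D), ‖ω‖ = 1 →
      Measure.map (fun x => ⟪ω, h x⟫_ℝ) μ = Measure.map (fun x => ⟪ω, h x⟫_ℝ) ν) :
    μ = ν := by
  have hpush : μ.map h = ν.map h := by
    have := Measure.isProbabilityMeasure_map (μ := μ) hm.aemeasurable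
    have := Measure.isProbabilityMeasure_map (μ := ν) hm.aemeasurable
    refine Measure.ext_of_map_inner fun u hu => ?_
    rw [Measure.map_map (by fun_prop) hm, Measure.map_map (by fun_prop) hm]
    exact hproj u hu
  exact (hm.measurableEmbedding hinj).map_injective hpush

theorem stmt_6 {X : Type*} [MeasurableSpace X] [StandardBorelSpace X] {D : ℕ}
    (h : X → EuclideanSpace ℝ (Fin D)) (hm : Measurable h) (hinj : Function.Injective h)
    (C : ℝ) (hb : ∀ x, ‖h x‖ ≤ C)
    (μ ν : Measure X) [IsProbabilityMeasure μ] [IsProbabilityMeasure ν]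
    (hproj : ∀ ω : EuclideanSpace ℝ (Fin D), ‖ω‖ = 1 →
      Measure.map (fun x => ⟪ω, h x⟫_ℝ) μ = Measure.map (fun x => ⟪ω, h x⟫_ℝ) ν) :
    μ = ν :=
  stmt_6_general h hm hinj μ ν hproj
end

section
/- Given an injective bounded measurable function h : X → ℝ^D, the map (μ, ν) ↦ max-ASW_h(μ, ν) := sup_{ω ∈ S^{D−1}} W₁(⟨ω, h⟩_♯μ, ⟨ω, h⟩_♯ν) defines a metric on the space of probability measures on X with finite first moments of h: it is nonnegative, symmetric, satisfies the triangle inequality, and vanishes if and only if μ = ν. -/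
open MeasureTheory Set
open scoped InnerProductSpace

noncomputable def cdf (μ : Measure ℝ) (ξ : ℝ) : ℝ := (μ (Set.Iic ξ)).toReal

noncomputable def quant (μ : Measure ℝ) (ρ : ℝ) : ℝ := sInf {ξ : ℝ | ρ ≤ cdf μ ξ}

/-- Wasserstein-1 distance on `ℝ` via quantile functions. -/
noncomputable def W1 (μ ν : Measure ℝ) : ℝ :=
  ∫ ρ in Set.Ioo (0 : ℝ) 1, |quant μ ρ - quant ν ρ|

/-- Maximum augmented sliced Wasserstein divergence associated with a feature map `h`. -/
noncomputable def maxASW {X : Type*} [MeasurableSpace X] {D : ℕ}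
    (h : X → EuclideanSpace ℝ (Fin D)) (μ ν : Measure X) : ℝ :=
  ⨆ ω : Metric.sphere (0 : EuclideanSpace ℝ (Fin D)) 1,
    W1 (Measure.map (fun x => ⟪(ω : EuclideanSpace ℝ (Fin D)), h x⟫_ℝ) μ)
       (Measure.map (fun x => ⟪(ω : EuclideanSpace ℝ (Fin D)), h x⟫_ℝ) ν)

/-! On `ℝ`, `W1` is the `L¹` distance between quantile functions on `(0, 1)`, hence a
pseudometric. The quantile function of `m` pushes the uniform measure on `(0, 1)` forward to `m`,
so a finite first moment makes it integrable, which gives the triangle inequality and the bound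
`W1 m₁ m₂ ≤ ∫ |x| ∂m₁ + ∫ |x| ∂m₂` keeping the supremum over directions finite; and quantile
functions that agree a.e. come from equal measures. Hence `maxASW h` is a pseudometric, and when it
vanishes all one-dimensional projections of `h_♯μ` and `h_♯ν` agree, so their characteristic
functions agree (Cramér–Wold) and `h_♯μ = h_♯ν`. An injective measurable map on a standard Borel
space is a measurable embedding, so `μ = ν`. -/

section Quantile

variable {m m' : Measure ℝ} [IsProbabilityMeasure m] [IsProbabilityMeasure m']

lemma cdf_eq_probability_cdf (m : Measure ℝ) [IsProbabilityMeasure m] :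
    cdf m = ProbabilityTheory.cdf m :=
  funext fun ξ => (ProbabilityTheory.cdf_eq_real m ξ).symm

lemma quant_le_iff {ρ : ℝ} (hρ : ρ ∈ Ioo 0 1) (ξ : ℝ) : quant m ρ ≤ ξ ↔ ρ ≤ cdf m ξ := by
  rw [quant, cdf_eq_probability_cdf]
  set F := ProbabilityTheory.cdf m
  have hne : {ξ | ρ ≤ F ξ}.Nonempty :=
    (((ProbabilityTheory.tendsto_cdf_atTop m).eventually (lt_mem_nhds hρ.2)).exists).imp
      fun _ => le_of_lt
  have hbdd : BddBelow {ξ | ρ ≤ F ξ} := by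
    obtain ⟨ξ₀, hξ₀⟩ :=
      ((ProbabilityTheory.tendsto_cdf_atBot m).eventually (gt_mem_nhds hρ.1)).exists_forall_of_atBot
    exact ⟨ξ₀, fun ξ hξ => le_of_not_ge fun hlt => (hξ₀ ξ hlt).not_ge hξ⟩
  refine ⟨fun hq => ?_, fun hξ => csInf_le hbdd hξ⟩
  -- `F` is right-continuous, and `ρ ≤ F y` for every `y > ξ` since `y` exceeds the infimum.
  refine ge_of_tendsto ((F.right_continuous ξ).tendsto.mono_left
    (nhdsWithin_mono ξ Ioi_subset_Ici_self)) ?_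
  filter_upwards [self_mem_nhdsWithin] with y hy
  obtain ⟨ξ', hξ', hξ'y⟩ := (csInf_lt_iff hbdd hne).1 (hq.trans_lt hy)
  exact hξ'.trans (F.mono hξ'y.le)

lemma le_cdf_quant {ρ : ℝ} (hρ : ρ ∈ Ioo 0 1) : ρ ≤ cdf m (quant m ρ) :=
  (quant_le_iff hρ _).1 le_rfl

lemma monotoneOn_quant : MonotoneOn (quant m) (Ioo 0 1) :=
  fun _ hρ₁ _ hρ₂ hle => (quant_le_iff hρ₁ _).2 (hle.trans (le_cdf_quant hρ₂))

lemma aemeasurable_quant : AEMeasurable (quant m) (volume.restrict (Ioo 0 1)) :=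
  aemeasurable_restrict_of_monotoneOn measurableSet_Ioo monotoneOn_quant

instance : IsProbabilityMeasure (volume.restrict (Ioo (0 : ℝ) 1)) :=
  ⟨by simp⟩

lemma volume_Ioo_inter_quant_le (ξ : ℝ) :
    volume (quant m ⁻¹' Iic ξ ∩ Ioo 0 1) = ENNReal.ofReal (cdf m ξ) := by
  have hset : quant m ⁻¹' Iic ξ ∩ Ioo 0 1 = Ioc 0 (cdf m ξ) \ {1} := by
    ext ρ
    have hle : cdf m ξ ≤ 1 := by
      rw [cdf_eq_probability_cdf]; exact ProbabilityTheory.cdf_le_one m ξ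
    constructor
    · rintro ⟨hq, hρ⟩
      exact ⟨⟨hρ.1, (quant_le_iff hρ ξ).1 hq⟩, hρ.2.ne⟩
    · rintro ⟨⟨hρ₀, hρξ⟩, hρ₁⟩
      have hρ : ρ ∈ Ioo 0 1 := ⟨hρ₀, lt_of_le_of_ne (hρξ.trans hle) hρ₁⟩
      exact ⟨(quant_le_iff hρ ξ).2 hρξ, hρ⟩
  rw [hset, measure_sdiff_null (Real.volume_singleton), Real.volume_Ioc, sub_zero]

lemma map_quant_volume_Ioo : (volume.restrict (Ioo 0 1)).map (quant m) = m := by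
  have := Measure.isProbabilityMeasure_map (μ := volume.restrict (Ioo (0 : ℝ) 1))
    (aemeasurable_quant (m := m))
  refine Measure.eq_of_cdf _ _ (StieltjesFunction.ext fun ξ => ?_)
  rw [ProbabilityTheory.cdf_eq_real, ← cdf_eq_probability_cdf, measureReal_def,
    Measure.map_apply_of_aemeasurable aemeasurable_quant measurableSet_Iic,
    Measure.restrict_apply' measurableSet_Ioo, volume_Ioo_inter_quant_le]
  exact ENNReal.toReal_ofReal ENNReal.toReal_nonneg

lemma integrableOn_quant (hm : Integrable id m) : IntegrableOn (quant m) (Ioo 0 1) := by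
  rw [← map_quant_volume_Ioo (m := m)] at hm
  exact (integrable_map_measure aestronglyMeasurable_id aemeasurable_quant).1 hm

lemma integral_abs_quant : ∫ ρ in Ioo 0 1, |quant m ρ| = ∫ x, |x| ∂m := by
  conv_rhs => rw [← map_quant_volume_Ioo (m := m)]
  rw [integral_map aemeasurable_quant continuous_abs.aestronglyMeasurable]

lemma eq_of_quant_ae_eq (h : quant m =ᵐ[volume.restrict (Ioo 0 1)] quant m') : m = m' := by
  rw [← map_quant_volume_Ioo (m := m), ← map_quant_volume_Ioo (m := m')]
  exact Measure.map_congr h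

end Quantile

section Wasserstein

lemma W1_nonneg (μ ν : Measure ℝ) : 0 ≤ W1 μ ν :=
  integral_nonneg fun _ => abs_nonneg _

lemma W1_comm (μ ν : Measure ℝ) : W1 μ ν = W1 ν μ := by
  simp only [W1, abs_sub_comm]

@[simp]
lemma W1_self (μ : Measure ℝ) : W1 μ μ = 0 := by
  simp [W1]

variable {m₁ m₂ m₃ : Measure ℝ} [IsProbabilityMeasure m₁] [IsProbabilityMeasure m₂]
  [IsProbabilityMeasure m₃]

lemma integrableOn_abs_quant_sub (h₁ : Integrable id m₁) (h₂ : Integrable id m₂) :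
    IntegrableOn (fun ρ => |quant m₁ ρ - quant m₂ ρ|) (Ioo 0 1) :=
  ((integrableOn_quant h₁).sub (integrableOn_quant h₂)).abs

lemma W1_triangle (h₁ : Integrable id m₁) (h₂ : Integrable id m₂) (h₃ : Integrable id m₃) :
    W1 m₁ m₂ ≤ W1 m₁ m₃ + W1 m₃ m₂ := by
  rw [W1, W1, W1, ← integral_add (integrableOn_abs_quant_sub h₁ h₃)
    (integrableOn_abs_quant_sub h₃ h₂)]
  exact integral_mono (integrableOn_abs_quant_sub h₁ h₂)
    ((integrableOn_abs_quant_sub h₁ h₃).add (integrableOn_abs_quant_sub h₃ h₂))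
    fun _ => abs_sub_le _ _ _

lemma W1_le_integral_abs_add (h₁ : Integrable id m₁) (h₂ : Integrable id m₂) :
    W1 m₁ m₂ ≤ ∫ x, |x| ∂m₁ + ∫ x, |x| ∂m₂ := by
  rw [← integral_abs_quant, ← integral_abs_quant, W1,
    ← integral_add (integrableOn_quant h₁).abs (integrableOn_quant h₂).abs]
  exact integral_mono (integrableOn_abs_quant_sub h₁ h₂)
    ((integrableOn_quant h₁).abs.add (integrableOn_quant h₂).abs) fun _ => abs_sub _ _

lemma eq_of_W1_eq_zero (h₁ : Integrable id m₁) (h₂ : Integrable id m₂) (h : W1 m₁ m₂ = 0) :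
    m₁ = m₂ := by
  refine eq_of_quant_ae_eq ?_
  filter_upwards [(integral_eq_zero_iff_of_nonneg (fun _ => abs_nonneg _)
    (integrableOn_abs_quant_sub h₁ h₂)).1 h] with ρ hρ
  exact sub_eq_zero.1 (abs_eq_zero.1 hρ)

end Wasserstein

section CramerWold

variable {E : Type*} [NormedAddCommGroup E] [InnerProductSpace ℝ E] [MeasurableSpace E]
  [BorelSpace E]

lemma charFun_smul_eq_charFun_map_inner_s7 (μ : Measure E) (r : ℝ) (ω : E) :
    charFun μ (r • ω) = charFun (μ.map fun x => ⟪ω, x⟫_ℝ) r := by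
  rw [charFun_apply, charFun_apply, integral_map (by fun_prop) (by fun_prop)]
  simp [inner_smul_right, real_inner_comm, mul_comm]

lemma MeasureTheory.Measure.ext_of_map_inner_sphere [CompleteSpace E] [SecondCountableTopology E]
    {μ ν : Measure E} [IsProbabilityMeasure μ] [IsProbabilityMeasure ν]
    (h : ∀ ω ∈ Metric.sphere (0 : E) 1, μ.map (fun x => ⟪ω, x⟫_ℝ) = ν.map fun x => ⟪ω, x⟫_ℝ) :
    μ = ν := by
  refine Measure.ext_of_charFun (funext fun t => ?_)
  rcases eq_or_ne t 0 with rfl | ht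
  · simp [charFun_zero]
  have hω : ‖t‖⁻¹ • t ∈ Metric.sphere (0 : E) 1 := by simp [norm_smul, ht]
  have ht' : t = ‖t‖ • ‖t‖⁻¹ • t := (smul_inv_smul₀ (norm_ne_zero_iff.2 ht) t).symm
  rw [ht', charFun_smul_eq_charFun_map_inner_s7, charFun_smul_eq_charFun_map_inner_s7, h _ hω]

end CramerWold

section Slice

variable {X E : Type*} [MeasurableSpace X] [NormedAddCommGroup E] [InnerProductSpace ℝ E]
  [MeasurableSpace E] [BorelSpace E] {h : X → E} {μ ν : Measure X}

/-- The pushforward `⟨ω, h⟩_♯ μ`. -/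
noncomputable def slice (h : X → E) (ω : E) (μ : Measure X) : Measure ℝ :=
  μ.map fun x => ⟪ω, h x⟫_ℝ

lemma slice_eq_map_map (hm : Measurable h) (ω : E) (μ : Measure X) :
    slice h ω μ = (μ.map h).map fun y => ⟪ω, y⟫_ℝ := by
  rw [slice, Measure.map_map (by fun_prop) hm]
  rfl

lemma isProbabilityMeasure_slice (hm : Measurable h) [IsProbabilityMeasure μ] (ω : E) :
    IsProbabilityMeasure (slice h ω μ) :=
  Measure.isProbabilityMeasure_map (by fun_prop)

lemma integrable_id_slice (hm : Measurable h) (hμ : Integrable h μ) (ω : E) :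
    Integrable id (slice h ω μ) :=
  (integrable_map_measure aestronglyMeasurable_id (by fun_prop)).2 (hμ.const_inner ω)

lemma integral_abs_slice_le (hm : Measurable h) (hμ : Integrable h μ) {ω : E} (hω : ‖ω‖ ≤ 1) :
    ∫ t, |t| ∂slice h ω μ ≤ ∫ x, ‖h x‖ ∂μ := by
  rw [slice, integral_map (by fun_prop) continuous_abs.aestronglyMeasurable]
  refine integral_mono (hμ.const_inner ω).abs hμ.norm fun x => ?_
  exact (abs_real_inner_le_norm _ _).trans (mul_le_of_le_one_left (norm_nonneg _) hω)

lemma W1_slice_le (hm : Measurable h) [IsProbabilityMeasure μ] [IsProbabilityMeasure ν]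
    (hμ : Integrable h μ) (hν : Integrable h ν) {ω : E} (hω : ‖ω‖ ≤ 1) :
    W1 (slice h ω μ) (slice h ω ν) ≤ ∫ x, ‖h x‖ ∂μ + ∫ x, ‖h x‖ ∂ν := by
  have := isProbabilityMeasure_slice hm (μ := μ) ω
  have := isProbabilityMeasure_slice hm (μ := ν) ω
  exact (W1_le_integral_abs_add (integrable_id_slice hm hμ ω) (integrable_id_slice hm hν ω)).trans
    (add_le_add (integral_abs_slice_le hm hμ hω) (integral_abs_slice_le hm hν hω))

end Slice

section MaxASW

variable {X : Type*} [MeasurableSpace X] {D : ℕ} {h : X → EuclideanSpace ℝ (Fin D)}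
  {μ ν κ : Measure X} [IsProbabilityMeasure μ] [IsProbabilityMeasure ν] [IsProbabilityMeasure κ]

local notation "E" => EuclideanSpace ℝ (Fin D)

lemma maxASW_eq_iSup_W1_slice (h : X → E) (μ ν : Measure X) :
    maxASW h μ ν = ⨆ ω : Metric.sphere (0 : E) 1, W1 (slice h ω μ) (slice h ω ν) :=
  rfl

lemma maxASW_nonneg (h : X → E) (μ ν : Measure X) : 0 ≤ maxASW h μ ν :=
  Real.iSup_nonneg fun _ => W1_nonneg _ _

lemma maxASW_comm (h : X → E) (μ ν : Measure X) : maxASW h μ ν = maxASW h ν μ :=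
  iSup_congr fun _ => W1_comm _ _

@[simp]
lemma maxASW_self (h : X → E) (μ : Measure X) : maxASW h μ μ = 0 := by
  simp [maxASW_eq_iSup_W1_slice]

lemma W1_slice_le_maxASW (hm : Measurable h) (hμ : Integrable h μ) (hν : Integrable h ν)
    (ω : Metric.sphere (0 : E) 1) : W1 (slice h ω μ) (slice h ω ν) ≤ maxASW h μ ν := by
  refine le_ciSup (f := fun ω : Metric.sphere (0 : E) 1 => W1 (slice h ω μ) (slice h ω ν))
    ⟨∫ x, ‖h x‖ ∂μ + ∫ x, ‖h x‖ ∂ν, ?_⟩ ω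
  rintro _ ⟨ω', rfl⟩
  exact W1_slice_le hm hμ hν (mem_sphere_zero_iff_norm.1 ω'.2).le

lemma maxASW_triangle (hm : Measurable h) (hμ : Integrable h μ) (hν : Integrable h ν)
    (hκ : Integrable h κ) : maxASW h μ ν ≤ maxASW h μ κ + maxASW h κ ν := by
  refine Real.iSup_le (fun ω => ?_) (add_nonneg (maxASW_nonneg _ _ _) (maxASW_nonneg _ _ _))
  have := isProbabilityMeasure_slice hm (μ := μ) ω
  have := isProbabilityMeasure_slice hm (μ := ν) ω
  have := isProbabilityMeasure_slice hm (μ := κ) ω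
  calc W1 (slice h ω μ) (slice h ω ν)
      ≤ W1 (slice h ω μ) (slice h ω κ) + W1 (slice h ω κ) (slice h ω ν) :=
        W1_triangle (integrable_id_slice hm hμ ω) (integrable_id_slice hm hν ω)
          (integrable_id_slice hm hκ ω)
    _ ≤ maxASW h μ κ + maxASW h κ ν :=
        add_le_add (W1_slice_le_maxASW hm hμ hκ ω) (W1_slice_le_maxASW hm hκ hν ω)

lemma map_eq_of_maxASW_eq_zero (hm : Measurable h) (hμ : Integrable h μ) (hν : Integrable h ν)
    (h0 : maxASW h μ ν = 0) : μ.map h = ν.map h := by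
  have := Measure.isProbabilityMeasure_map (μ := μ) hm.aemeasurable
  have := Measure.isProbabilityMeasure_map (μ := ν) hm.aemeasurable
  refine Measure.ext_of_map_inner_sphere fun ω hω => ?_
  have := isProbabilityMeasure_slice hm (μ := μ) ω
  have := isProbabilityMeasure_slice hm (μ := ν) ω
  rw [← slice_eq_map_map hm, ← slice_eq_map_map hm]
  refine eq_of_W1_eq_zero (integrable_id_slice hm hμ ω) (integrable_id_slice hm hν ω)
    (le_antisymm ?_ (W1_nonneg _ _))
  exact h0 ▸ W1_slice_le_maxASW hm hμ hν ⟨ω, hω⟩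

lemma maxASW_eq_zero_iff [StandardBorelSpace X] (hm : Measurable h)
    (hinj : Function.Injective h) (hμ : Integrable h μ) (hν : Integrable h ν) :
    maxASW h μ ν = 0 ↔ μ = ν := by
  refine ⟨fun h0 => ?_, fun hμν => hμν ▸ maxASW_self h μ⟩
  have hemb := hm.measurableEmbedding hinj
  rw [← hemb.comap_map μ, ← hemb.comap_map ν, map_eq_of_maxASW_eq_zero hm hμ hν h0]

end MaxASW

theorem stmt_7_general {X : Type*} [MeasurableSpace X] [StandardBorelSpace X] {D : ℕ}
    (h : X → EuclideanSpace ℝ (Fin D)) (hm : Measurable h) (hinj : Function.Injective h) :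
    (∀ (μ ν : Measure X), IsProbabilityMeasure μ → IsProbabilityMeasure ν →
        Integrable h μ → Integrable h ν → 0 ≤ maxASW h μ ν) ∧
    (∀ (μ ν : Measure X), IsProbabilityMeasure μ → IsProbabilityMeasure ν →
        Integrable h μ → Integrable h ν → maxASW h μ ν = maxASW h ν μ) ∧
    (∀ (μ ν κ : Measure X), IsProbabilityMeasure μ → IsProbabilityMeasure ν →
        IsProbabilityMeasure κ → Integrable h μ → Integrable h ν → Integrable h κ →
        maxASW h μ ν ≤ maxASW h μ κ + maxASW h κ ν) ∧
    (∀ (μ ν : Measure X), IsProbabilityMeasure μ → IsProbabilityMeasure ν →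
        Integrable h μ → Integrable h ν → (maxASW h μ ν = 0 ↔ μ = ν)) :=
  ⟨fun μ ν _ _ _ _ => maxASW_nonneg h μ ν,
    fun μ ν _ _ _ _ => maxASW_comm h μ ν,
    fun _ _ _ _ _ _ hμ hν hκ => maxASW_triangle hm hμ hν hκ,
    fun _ _ _ _ hμ hν => maxASW_eq_zero_iff hm hinj hμ hν⟩

theorem stmt_7 {X : Type*} [MeasurableSpace X] [StandardBorelSpace X] {D : ℕ}
    (h : X → EuclideanSpace ℝ (Fin D)) (hm : Measurable h) (hinj : Function.Injective h)
    (C : ℝ) (hb : ∀ x, ‖h x‖ ≤ C) :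
    (∀ (μ ν : Measure X), IsProbabilityMeasure μ → IsProbabilityMeasure ν →
        Integrable h μ → Integrable h ν → 0 ≤ maxASW h μ ν) ∧
    (∀ (μ ν : Measure X), IsProbabilityMeasure μ → IsProbabilityMeasure ν →
        Integrable h μ → Integrable h ν → maxASW h μ ν = maxASW h ν μ) ∧
    (∀ (μ ν κ : Measure X), IsProbabilityMeasure μ → IsProbabilityMeasure ν →
        IsProbabilityMeasure κ → Integrable h μ → Integrable h ν → Integrable h κ →
        maxASW h μ ν ≤ maxASW h μ κ + maxASW h κ ν) ∧
    (∀ (μ ν : Measure X), IsProbabilityMeasure μ → IsProbabilityMeasure ν →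
        Integrable h μ → Integrable h ν → (maxASW h μ ν = 0 ↔ μ = ν)) :=
  stmt_7_general h hm hinj
end
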